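/- Let A ∈ ℝ^{n×n} be symmetric negative definite with simple eigenvalues λ₁ < ... < λ_p among its smallest p, and let X* = U_p D with D diagonal ±1. Then for each i = 1,...,p, the matrix J_{ii} = 2A - A X*_i (X*_i)ᵀ - X*_i (X*_i)ᵀ A - A x*_i (x*_i)ᵀ - ((x*_i)ᵀ x*_i) A - ((x*_i)ᵀ A x*_i) I - x*_i (x*_i)ᵀ A equals A - 2U_iΛ_iU_iᵀ - 2λ_i u_i u_iᵀ - λ_i I and is symmetric positive definite. -/

import Mathlib

open Matrix Finset

/-!
In the eigenbasis `U` every term of `J_ii` is of the form `U * diagonal e * Uᵀ`: `A` is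
`U * diagonal λ * Uᵀ`, the signs `d_j = ±1` drop out of `x*_j x*_jᵀ = u_j u_jᵀ`, and
`x*_iᵀ x*_i = 1`, `x*_iᵀ A x*_i = λ_i`. Hence `J_ii = U * diagonal μ * Uᵀ` with
`μ_k = -(λ_k + λ_i)` for `k < i`, `μ_i = -4 λ_i` and `μ_k = λ_k - λ_i` for `k > i`, and all
of these are positive because the `λ_k` are negative and `λ_i` is a simple eigenvalue below
the later ones.
-/

section ConjDiagonal

variable {ι : Type*} [Fintype ι] [DecidableEq ι] {U : Matrix ι ι ℝ}

variable (U) in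
def conjDiagonal : (ι → ℝ) →ₗ[ℝ] Matrix ι ι ℝ :=
  LinearMap.mulRight ℝ Uᵀ ∘ₗ LinearMap.mulLeft ℝ U ∘ₗ diagonalLinearMap ι ℝ ℝ

lemma conjDiagonal_apply (e : ι → ℝ) : conjDiagonal U e = U * diagonal e * Uᵀ := rfl

lemma conjDiagonal_mul_conjDiagonal (hU : Uᵀ * U = 1) (e f : ι → ℝ) :
    conjDiagonal U e * conjDiagonal U f = conjDiagonal U (e * f) := by
  simp only [conjDiagonal_apply, Matrix.mul_assoc, ← Matrix.mul_assoc Uᵀ, hU, Matrix.one_mul,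
    ← Matrix.mul_assoc (diagonal e), diagonal_mul_diagonal]
  rfl

lemma conjDiagonal_one (hU : U * Uᵀ = 1) : conjDiagonal U 1 = 1 := by
  rw [conjDiagonal_apply, diagonal_one', Matrix.mul_one, hU]

lemma vecMulVec_col_self (k : ι) :
    vecMulVec (U.col k) (U.col k) = conjDiagonal U (Pi.single k 1) := by
  ext a b
  simp [conjDiagonal_apply, vecMulVec_apply, mul_apply, diagonal_apply, Pi.single_apply]

lemma sum_Iic_smul_conjDiagonal_single [LinearOrder ι] [LocallyFiniteOrderBot ι] (a : ι)
    (f : ι → ℝ) :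
    ∑ k ∈ Iic a, f k • conjDiagonal U (Pi.single k 1) =
      conjDiagonal U ((Set.Iic a).indicator f) := by
  simp only [← map_smul, ← map_sum]
  congr 1
  ext l
  simp [Finset.sum_apply, Pi.single_apply, Set.indicator_apply]

lemma col_dotProduct_col (hU : Uᵀ * U = 1) (k : ι) : U.col k ⬝ᵥ U.col k = 1 := by
  simpa [mul_apply, dotProduct, Matrix.one_apply] using congrFun (congrFun hU k) k

lemma col_dotProduct_conjDiagonal_mulVec (hU : Uᵀ * U = 1) (e : ι → ℝ) (k : ι) :
    U.col k ⬝ᵥ conjDiagonal U e *ᵥ U.col k = e k := by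
  rw [← mulVec_single_one, mulVec_mulVec, dotProduct_mulVec, ← vecMul_transpose, vecMul_vecMul,
    conjDiagonal_apply, Matrix.mul_assoc, Matrix.mul_assoc, hU, Matrix.mul_one,
    ← Matrix.mul_assoc, hU, Matrix.one_mul]
  simp

lemma posDef_conjDiagonal (hU : U * Uᵀ = 1) {e : ι → ℝ} (he : ∀ k, 0 < e k) :
    (conjDiagonal U e).PosDef := by
  have hinj : Function.Injective U.vecMul := fun x y h => by
    simpa [vecMul_vecMul, hU] using congrArg (· ᵥ* Uᵀ) h
  simpa [conjDiagonal_apply] using (PosDef.diagonal he).mul_mul_conjTranspose_same hinj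

end ConjDiagonal

section JacobianEigenvalues

variable {ι : Type*} [LinearOrder ι] (ev : ι → ℝ) (a : ι)

/-- `a` is the index of `λ_i`; the value at `k` is the eigenvalue of `J_ii` on `u_k`. -/
def jacobianEigenvalues (k : ι) : ℝ :=
  if k < a then -(ev k + ev a) else if k = a then -4 * ev a else ev k - ev a

/- `J_ii` in the eigenbasis, first as defined and then in the closed form
`A - 2U_iΛ_iU_iᵀ - 2λ_i u_iu_iᵀ - λ_i I`. -/
lemma jacobianEigenvalues_eq_jacobian :
    jacobianEigenvalues ev a = (2 : ℝ) • ev - ev * (Set.Iic a).indicator 1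
      - (Set.Iic a).indicator 1 * ev - ev * Pi.single a 1 - ev - ev a • 1
      - Pi.single a 1 * ev := by
  ext l
  simp only [jacobianEigenvalues, Pi.sub_apply, Pi.smul_apply, Pi.mul_apply, Pi.one_apply,
    Set.indicator_apply, Set.mem_Iic, Pi.single_apply, smul_eq_mul]
  split_ifs <;> first | order | (subst l; ring) | ring

lemma jacobianEigenvalues_eq_spectral :
    jacobianEigenvalues ev a = ev - (2 : ℝ) • (Set.Iic a).indicator ev
      - (2 * ev a) • Pi.single a 1 - ev a • 1 := by
  ext l
  simp only [jacobianEigenvalues, Pi.sub_apply, Pi.smul_apply, Pi.one_apply,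
    Set.indicator_apply, Set.mem_Iic, Pi.single_apply, smul_eq_mul]
  split_ifs <;> first | order | (subst l; ring) | ring

variable {ev a} in
lemma jacobianEigenvalues_pos (hneg : ∀ k, ev k < 0) (hsimple : ∀ k, a < k → ev a < ev k)
    (k : ι) : 0 < jacobianEigenvalues ev a k := by
  have := hneg k
  have := hneg a
  unfold jacobianEigenvalues
  split_ifs with hlt heq
  · linarith
  · linarith
  · linarith [hsimple k (lt_of_le_of_ne (not_lt.mp hlt) (Ne.symm heq))]

end JacobianEigenvalues

theorem stmt6_general {n p : ℕ} (hpn : p ≤ n) (A U : Matrix (Fin n) (Fin n) ℝ)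
    (ev : Fin n → ℝ)
    (hdecomp : A = U * Matrix.diagonal ev * Uᵀ)
    (horth : U * Uᵀ = 1)
    (hneg : ∀ i, ev i < 0)
    (hsimple : ∀ i j : Fin n, (i : ℕ) < p → i < j → ev i < ev j)
    (d : Fin p → ℝ) (hd : ∀ i, d i = 1 ∨ d i = -1) :
    ∀ i : Fin p,
      let c : Fin p → Fin n := Fin.castLE hpn
      let u : Fin n → Fin n → ℝ := fun k j => U j k
      let xs : Fin p → Fin n → ℝ := fun k => d k • u (c k)
      let B : Matrix (Fin n) (Fin n) ℝ :=
        ∑ j ∈ Finset.univ.filter (· ≤ i), vecMulVec (xs j) (xs j)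
      let J : Matrix (Fin n) (Fin n) ℝ :=
        (2 : ℝ) • A - A * B - B * A - A * vecMulVec (xs i) (xs i)
          - (xs i ⬝ᵥ xs i) • A
          - (xs i ⬝ᵥ A.mulVec (xs i)) • (1 : Matrix (Fin n) (Fin n) ℝ)
          - vecMulVec (xs i) (xs i) * A
      J = A - ((2 : ℝ) • ∑ j ∈ Finset.univ.filter (· ≤ i),
              ev (c j) • vecMulVec (u (c j)) (u (c j)))
          - ((2 : ℝ) * ev (c i)) • vecMulVec (u (c i)) (u (c i))
          - ev (c i) • (1 : Matrix (Fin n) (Fin n) ℝ)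
        ∧ J.PosDef := by
  intro i c u xs B J
  have hUtU : Uᵀ * U = 1 := mul_eq_one_comm.mp horth
  have hA : A = conjDiagonal U ev := hdecomp
  have hu : ∀ k, u k = U.col k := fun _ => rfl
  have hxs (j : Fin p) : vecMulVec (xs j) (xs j) = conjDiagonal U (Pi.single (c j) 1) := by
    rcases hd j with h | h <;> simp [xs, h, hu, vecMulVec_col_self]
  have hxx : xs i ⬝ᵥ xs i = 1 := by
    rcases hd i with h | h <;> simp [xs, h, hu, col_dotProduct_col hUtU]
  have hxAx : xs i ⬝ᵥ A *ᵥ xs i = ev (c i) := by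
    rcases hd i with h | h <;>
      simp [xs, h, hu, hA, mulVec_neg, col_dotProduct_conjDiagonal_mulVec hUtU]
  have hsum (f : Fin n → ℝ) :
      ∑ j ∈ univ.filter (· ≤ i), f (c j) • conjDiagonal U (Pi.single (c j) 1)
        = conjDiagonal U ((Set.Iic (c i)).indicator f) := by
    rw [filter_ge_eq_Iic, ← sum_Iic_smul_conjDiagonal_single]
    exact (Fin.sum_Iic_castLE hpn (fun k => f k • conjDiagonal U (Pi.single k 1)) i).symm
  have hB : B = conjDiagonal U ((Set.Iic (c i)).indicator 1) := by
    simpa only [Pi.one_apply, one_smul, ← hxs] using hsum 1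
  have hJ : J = conjDiagonal U (jacobianEigenvalues ev (c i)) := by
    simp only [J]
    rw [hB, hxs i, hxx, hxAx, hA, ← conjDiagonal_one horth, jacobianEigenvalues_eq_jacobian]
    simp only [conjDiagonal_mul_conjDiagonal hUtU, one_smul, map_smul, map_sub]
  refine ⟨?_, hJ ▸ posDef_conjDiagonal horth (jacobianEigenvalues_pos hneg ?_)⟩
  · rw [hJ, jacobianEigenvalues_eq_spectral, hA, ← conjDiagonal_one horth]
    simp only [hu, vecMulVec_col_self, hsum ev, map_smul, map_sub]
  · exact fun k hk => hsimple _ k i.isLt hk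

/-- at the stable fixed points `X* = U_p D` of TriOFM-(Obj2)
(`A` symmetric negative definite), the diagonal Jacobian blocks
`J_ii = 2A - AX*_i(X*_i)ᵀ - X*_i(X*_i)ᵀA - Ax*_i(x*_i)ᵀ - (x*_iᵀx*_i)A
- (x*_iᵀAx*_i)I - x*_i(x*_i)ᵀA`
equal `A - 2U_iΛ_iU_iᵀ - 2λ_i u_iu_iᵀ - λ_i I` and are symmetric positive
definite. -/
theorem stmt6 {n p : ℕ} (hpn : p ≤ n) (A U : Matrix (Fin n) (Fin n) ℝ)
    (ev : Fin n → ℝ)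
    (hsymm : A.IsSymm)
    (hdecomp : A = U * Matrix.diagonal ev * Uᵀ)
    (horth : U * Uᵀ = 1)
    (hneg : ∀ i, ev i < 0)
    (hmono : Monotone ev)
    (hsimple : ∀ i j : Fin n, (i : ℕ) < p → i < j → ev i < ev j)
    (d : Fin p → ℝ) (hd : ∀ i, d i = 1 ∨ d i = -1) :
    ∀ i : Fin p,
      let c : Fin p → Fin n := Fin.castLE hpn
      let u : Fin n → Fin n → ℝ := fun k j => U j k
      let xs : Fin p → Fin n → ℝ := fun k => d k • u (c k)
      let B : Matrix (Fin n) (Fin n) ℝ :=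
        ∑ j ∈ Finset.univ.filter (· ≤ i), vecMulVec (xs j) (xs j)
      let J : Matrix (Fin n) (Fin n) ℝ :=
        (2 : ℝ) • A - A * B - B * A - A * vecMulVec (xs i) (xs i)
          - (xs i ⬝ᵥ xs i) • A
          - (xs i ⬝ᵥ A.mulVec (xs i)) • (1 : Matrix (Fin n) (Fin n) ℝ)
          - vecMulVec (xs i) (xs i) * A
      J = A - ((2 : ℝ) • ∑ j ∈ Finset.univ.filter (· ≤ i),
              ev (c j) • vecMulVec (u (c j)) (u (c j)))
          - ((2 : ℝ) * ev (c i)) • vecMulVec (u (c i)) (u (c i))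
          - ev (c i) • (1 : Matrix (Fin n) (Fin n) ℝ)
        ∧ J.PosDef :=
  stmt6_general hpn A U ev hdecomp horth hneg hsimple d hd
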